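/- arXiv:1003.1382 — 12 statements merged into one kernel-verified Lean document; each statement's English description precedes it below -/
import Mathlib

section
/- Let (G_H,*) be a second Smarandache Bol loop. Then every element of H has a two-sided inverse: s^λ = s^ρ for all s in H. -/
/-- A loop: a binary operation with two-sided identity such that all left and
right translations are bijections. -/
structure SLoop (G : Type*) where
  mul : G → G → G
  one : G
  one_mul : ∀ x, mul one x = x
  mul_one : ∀ x, mul x one = x
  bij_left : ∀ a, Function.Bijective (fun x => mul a x)
  bij_right : ∀ a, Function.Bijective (fun x => mul x a)

namespace SLoop

variable {G : Type*}

/-- The right inverse `x^ρ`, the unique element with `x * x^ρ = 1`. -/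
noncomputable def rinv (L : SLoop G) (x : G) : G :=
  Classical.choose ((L.bij_left x).surjective L.one)

/-- The left inverse `x^λ`, the unique element with `x^λ * x = 1`. -/
noncomputable def linv (L : SLoop G) (x : G) : G :=
  Classical.choose ((L.bij_right x).surjective L.one)

/-- `H` is a subloop: contains `1`, closed under multiplication, and closed under
the unique solutions of `a * x = b` and `y * a = b` for `a, b ∈ H`. -/
def IsSubloop (L : SLoop G) (H : Set G) : Prop :=
  L.one ∈ H ∧ (∀ a ∈ H, ∀ b ∈ H, L.mul a b ∈ H) ∧
    (∀ a ∈ H, ∀ b ∈ H, ∀ x, L.mul a x = b → x ∈ H) ∧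
    (∀ a ∈ H, ∀ b ∈ H, ∀ y, L.mul y a = b → y ∈ H)

/-- The second Smarandache Bol identity: `((x*s)*z)*s = x*((s*z)*s)` for all
`x z : G` and `s ∈ H`. -/
def IsS2Bol (L : SLoop G) (H : Set G) : Prop :=
  ∀ x z : G, ∀ s ∈ H, L.mul (L.mul (L.mul x s) z) s = L.mul x (L.mul (L.mul s z) s)

/-- Natural powers in a loop: `s^0 = 1`, `s^(n+1) = s^n * s`. -/
def pow (L : SLoop G) (s : G) : ℕ → G
  | 0 => L.one
  | n + 1 => L.mul (L.pow s n) s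

/-- A Smarandache bijection: a bijection of `G` mapping `H` onto `H`. -/
def SBij (L : SLoop G) (H : Set G) (A : G → G) : Prop :=
  Function.Bijective A ∧ A '' H = H

end SLoop

/-- In a second Smarandache Bol loop, every element of `H` has a two-sided
inverse: `s^λ = s^ρ` for all `s ∈ H`. -/
theorem s2bol_two_sided_inverse {G : Type*} (L : SLoop G) (H : Set G)
    (hH : L.IsSubloop H) (hBol : L.IsS2Bol H) :
    ∀ s ∈ H, L.linv s = L.rinv s := by
  intro s hs
  have hl : L.mul (L.linv s) s = L.one :=
    Classical.choose_spec ((L.bij_right s).surjective L.one)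
  have hr : L.mul s (L.rinv s) = L.one :=
    Classical.choose_spec ((L.bij_left s).surjective L.one)
  have key := hBol (L.linv s) (L.rinv s) s hs
  rw [hl, L.one_mul, hr, L.one_mul] at key
  -- key : L.mul (L.rinv s) s = L.mul (L.linv s) s
  have hr2 : L.mul (L.rinv s) s = L.one := key.trans hl
  exact (L.bij_right s).injective (hl.trans hr2.symm)
end

section
/- Let (G_H,*) be a second Smarandache Bol loop. Then for all x in G, s in H, and m,n in ℕ: (x*s^m)*s^n = x*s^(m+n). -/
private theorem s2bol_key {G : Type*} (L : SLoop G) (H : Set G)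
    (hBol : L.IsS2Bol H) (s : G) (hs : s ∈ H) :
    ∀ n : ℕ, (L.mul s (L.pow s n) = L.pow s (n+1)) ∧
      (∀ x, L.mul x (L.pow s (n+1)) = L.mul (L.mul x (L.pow s n)) s) ∧
      (∀ x, L.mul (L.mul x s) (L.pow s n) = L.mul x (L.pow s (n+1))) := by
  intro n
  induction n with
  | zero =>
    refine ⟨by simp [SLoop.pow, L.mul_one, L.one_mul], ?_, ?_⟩
    · intro x; simp [SLoop.pow, L.mul_one, L.one_mul]
    · intro x; simp [SLoop.pow, L.mul_one, L.one_mul]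
  | succ n ih =>
    obtain ⟨ha, hb, hc⟩ := ih
    have hb' : ∀ x, L.mul x (L.pow s (n+2)) = L.mul (L.mul x (L.pow s (n+1))) s := by
      intro x
      calc L.mul x (L.pow s (n+2)) = L.mul x (L.mul (L.pow s (n+1)) s) := rfl
        _ = L.mul x (L.mul (L.mul s (L.pow s n)) s) := by rw [ha]
        _ = L.mul (L.mul (L.mul x s) (L.pow s n)) s := (hBol x (L.pow s n) s hs).symm
        _ = L.mul (L.mul x (L.pow s (n+1))) s := by rw [hc]
    refine ⟨?_, hb', ?_⟩
    · calc L.mul s (L.pow s (n+1)) = L.mul (L.mul s (L.pow s n)) s := hb s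
        _ = L.mul (L.pow s (n+1)) s := by rw [ha]
        _ = L.pow s (n+2) := rfl
    · intro x
      calc L.mul (L.mul x s) (L.pow s (n+1))
          = L.mul (L.mul (L.mul x s) (L.pow s n)) s := hb (L.mul x s)
        _ = L.mul (L.mul x (L.pow s (n+1))) s := by rw [hc]
        _ = L.mul x (L.pow s (n+2)) := (hb' x).symm

/-- In a second Smarandache Bol loop, `(x*s^m)*s^n = x*s^(m+n)` for all
`x ∈ G`, `s ∈ H` and `m n ∈ ℕ`. -/
theorem s2bol_pow_add {G : Type*} (L : SLoop G) (H : Set G)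
    (hH : L.IsSubloop H) (hBol : L.IsS2Bol H) :
    ∀ x : G, ∀ s ∈ H, ∀ m n : ℕ,
      L.mul (L.mul x (L.pow s m)) (L.pow s n) = L.mul x (L.pow s (m + n)) := by
  intro x s hs m n
  have key := s2bol_key L H hBol s hs
  induction n with
  | zero => simp [SLoop.pow, L.mul_one]
  | succ n ih =>
    calc L.mul (L.mul x (L.pow s m)) (L.pow s (n+1))
        = L.mul (L.mul (L.mul x (L.pow s m)) (L.pow s n)) s := (key n).2.1 _
      _ = L.mul (L.mul x (L.pow s (m+n))) s := by rw [ih]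
      _ = L.mul x (L.pow s (m+n+1)) := ((key (m+n)).2.1 x).symm
      _ = L.mul x (L.pow s (m+(n+1))) := by ring_nf
end

section
/- Let (G_H,*) be a second Smarandache Bol loop. Then for all x in G, s in H, and m,n in ℕ: if m ≥ n then (x*s^m)*(s^ρ)^n = x*s^(m−n) and (x*(s^ρ)^n)*s^m = x*s^(m−n), while if n ≥ m then (x*s^m)*(s^ρ)^n = x*(s^ρ)^(n−m) and (x*(s^ρ)^n)*s^m = x*(s^ρ)^(n−m). (These are the mixed-sign cases of the identity x*s^m * s^n = x*s^(m+n) for integer exponents.) -/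
section Aux

variable {G : Type*}

lemma sloop_mul_rinv (L : SLoop G) (x : G) : L.mul x (L.rinv x) = L.one :=
  Classical.choose_spec ((L.bij_left x).surjective L.one)

lemma sloop_rinv_mem (L : SLoop G) {H : Set G} (hH : L.IsSubloop H) {s : G} (hs : s ∈ H) :
    L.rinv s ∈ H :=
  hH.2.2.1 s hs L.one hH.1 (L.rinv s) (sloop_mul_rinv L s)

lemma sloop_mul_s_rinv (L : SLoop G) {H : Set G} (hBol : L.IsS2Bol H) {s : G} (hs : s ∈ H)
    (x : G) : L.mul (L.mul x s) (L.rinv s) = x := by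
  have h := hBol x (L.rinv s) s hs
  rw [sloop_mul_rinv, L.one_mul] at h
  have := (L.bij_right s).injective (a₁ := L.mul (L.mul x s) (L.rinv s)) (a₂ := x)
  simpa using this h

lemma sloop_mul_rinv_s (L : SLoop G) {H : Set G} (hBol : L.IsS2Bol H) {s : G} (hs : s ∈ H)
    (x : G) : L.mul (L.mul x (L.rinv s)) s = x := by
  obtain ⟨y, rfl⟩ := (L.bij_right s).surjective x
  rw [sloop_mul_s_rinv L hBol hs]

/-- `x * s^n` is the `n`-fold iterate of right translation by `s`, for `s ∈ H`. -/
lemma sloop_pow_iter (L : SLoop G) {H : Set G} (hBol : L.IsS2Bol H) {s : G} (hs : s ∈ H) :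
    ∀ n x, L.mul x (L.pow s n) = (fun y => L.mul y s)^[n] x := by
  intro n
  induction n using Nat.twoStepInduction with
  | zero => intro x; simp [SLoop.pow, L.mul_one]
  | one => intro x; simp [SLoop.pow, L.one_mul]
  | more n ih1 ih2 =>
    intro x
    have hs1 : L.pow s (n + 1) = L.mul s (L.pow s n) := by
      have h1 : L.mul s (L.pow s n) = (fun y => L.mul y s)^[n] s := ih1 s
      have h2 : L.pow s (n + 1) = (fun y => L.mul y s)^[n + 1] L.one := by
        rw [← ih2 L.one, L.one_mul]
      rw [h2, Function.iterate_succ_apply, h1, L.one_mul]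
    have : L.pow s (n + 2) = L.mul (L.mul s (L.pow s n)) s := by
      rw [SLoop.pow, hs1]
    rw [this, ← hBol x (L.pow s n) s hs]
    have := ih1 (L.mul x s)
    rw [this, Function.iterate_succ_apply' (fun y => L.mul y s) (n + 1),
      Function.iterate_succ_apply]

lemma iter_cancel {f g : G → G} (hgf : ∀ x, g (f x) = x) :
    ∀ n m : ℕ, n ≤ m → ∀ x, g^[n] (f^[m] x) = f^[m - n] x := by
  intro n
  induction n with
  | zero => simp
  | succ n ih =>
    intro m hm x
    obtain ⟨m', rfl⟩ : ∃ m', m = m' + 1 := ⟨m - 1, by omega⟩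
    rw [Function.iterate_succ_apply g n, Function.iterate_succ_apply' f m',
      hgf, ih m' (by omega)]
    congr 1
    omega

end Aux

/-- In a second Smarandache Bol loop, the mixed-sign cases of
`x*s^m * s^n = x*s^(m+n)` hold: for `m ≥ n`,
`(x*s^m)*(s^ρ)^n = x*s^(m-n)` and `(x*(s^ρ)^n)*s^m = x*s^(m-n)`, while for
`n ≥ m`, `(x*s^m)*(s^ρ)^n = x*(s^ρ)^(n-m)` and
`(x*(s^ρ)^n)*s^m = x*(s^ρ)^(n-m)`. -/
theorem s2bol_pow_mixed {G : Type*} (L : SLoop G) (H : Set G)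
    (hH : L.IsSubloop H) (hBol : L.IsS2Bol H) :
    ∀ x : G, ∀ s ∈ H, ∀ m n : ℕ,
      (m ≥ n →
        L.mul (L.mul x (L.pow s m)) (L.pow (L.rinv s) n) = L.mul x (L.pow s (m - n)) ∧
        L.mul (L.mul x (L.pow (L.rinv s) n)) (L.pow s m) = L.mul x (L.pow s (m - n))) ∧
      (n ≥ m →
        L.mul (L.mul x (L.pow s m)) (L.pow (L.rinv s) n) = L.mul x (L.pow (L.rinv s) (n - m)) ∧
        L.mul (L.mul x (L.pow (L.rinv s) n)) (L.pow s m) = L.mul x (L.pow (L.rinv s) (n - m))) := by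
  intro x s hs m n
  set f : G → G := fun y => L.mul y s with hf
  set g : G → G := fun y => L.mul y (L.rinv s) with hg
  have hrs : L.rinv s ∈ H := sloop_rinv_mem L hH hs
  have hpf : ∀ k y, L.mul y (L.pow s k) = f^[k] y := sloop_pow_iter L hBol hs
  have hpg : ∀ k y, L.mul y (L.pow (L.rinv s) k) = g^[k] y := by
    have := sloop_pow_iter L hBol hrs
    simpa [hg] using this
  have hgf : ∀ y, g (f y) = y := fun y => sloop_mul_s_rinv L hBol hs y
  have hfg : ∀ y, f (g y) = y := fun y => sloop_mul_rinv_s L hBol hs y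
  constructor
  · intro hmn
    constructor
    · rw [hpf m x, hpg n, iter_cancel hgf n m hmn, hpf]
    · rw [hpg n x, hpf m]
      have hsplit : m = (m - n) + n := by omega
      rw [hsplit, Function.iterate_add_apply]
      have : f^[n] (g^[n] x) = x := by
        have := iter_cancel hfg n n le_rfl x
        simpa using this
      rw [this, hpf]
      congr 2
  · intro hnm
    constructor
    · rw [hpf m x, hpg n]
      have hsplit : n = (n - m) + m := by omega
      rw [hsplit, Function.iterate_add_apply]
      have : g^[m] (f^[m] x) = x := by
        have := iter_cancel hgf m m le_rfl x
        simpa using this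
      rw [this, hpg]
      congr 2
    · rw [hpg n x, hpf m, iter_cancel hfg m n hnm, hpg]
end

section
/- Every second Smarandache Bol loop satisfies the Smarandache right power alternative property: for all x in G, s in H, and n in ℕ, x*s^n equals the n-fold iterate of the right translation R_s (where R_s(y) = y*s) applied to x; that is, R_{s^n} = (R_s)^n. -/
/-- Every second Smarandache Bol loop satisfies the Smarandache right power
alternative property: `x * s^n = (R_s)^[n] x`, i.e. `R_{s^n} = (R_s)^n`. -/
theorem s2bol_srpap {G : Type*} (L : SLoop G) (H : Set G)
    (hH : L.IsSubloop H) (hBol : L.IsS2Bol H) :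
    ∀ x : G, ∀ s ∈ H, ∀ n : ℕ,
      L.mul x (L.pow s n) = (fun y => L.mul y s)^[n] x := by
  intro x s hs n
  set R : G → G := fun y => L.mul y s with hR
  have key : ∀ n : ℕ, (∀ x, L.mul x (L.pow s n) = R^[n] x) ∧
      (∀ x, L.mul x (L.pow s (n + 1)) = R^[n + 1] x) := by
    intro n
    induction n with
    | zero =>
      constructor
      · intro x; simp [SLoop.pow, L.mul_one]
      · intro x; simp [SLoop.pow, hR, L.one_mul]
    | succ n ih =>
      obtain ⟨h1, h2⟩ := ih
      refine ⟨h2, ?_⟩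
      intro x
      have hQ : L.mul s (L.pow s n) = L.pow s (n + 1) := by
        calc L.mul s (L.pow s n) = R^[n] s := h1 s
          _ = R^[n] (R L.one) := by simp [hR, L.one_mul]
          _ = R^[n + 1] L.one := (Function.iterate_succ_apply R n L.one).symm
          _ = L.mul L.one (L.pow s (n + 1)) := (h2 L.one).symm
          _ = L.pow s (n + 1) := L.one_mul _
      have hpow : L.pow s (n + 2) = L.mul (L.mul s (L.pow s n)) s := by
        show L.mul (L.pow s (n + 1)) s = _
        rw [hQ]
      calc L.mul x (L.pow s (n + 2))
          = L.mul x (L.mul (L.mul s (L.pow s n)) s) := by rw [hpow]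
        _ = L.mul (L.mul (L.mul x s) (L.pow s n)) s := (hBol x (L.pow s n) s hs).symm
        _ = R (R^[n] (R x)) := by rw [h1 (L.mul x s)]
        _ = R (R^[n + 1] x) := by rw [← Function.iterate_succ_apply R n x]
        _ = R^[n + 2] x := (Function.iterate_succ_apply' R (n + 1) x).symm
  exact (key n).1 x
end

section
/- Let (G_H,*) be a special loop. Then the set of second right Smarandache autotopisms of G_H and the set of second left Smarandache autotopisms of G_H each form a group under componentwise composition (each is a subgroup of the group of triples of bijections of G). -/
section Aux

variable {G : Type*} {H : Set G}

lemma sbij_perm_mul (L : SLoop G) {a b : Equiv.Perm G}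
    (ha : L.SBij H a) (hb : L.SBij H b) : L.SBij H (a * b) := by
  refine ⟨(a * b).bijective, ?_⟩
  have : ⇑(a * b) = ⇑a ∘ ⇑b := rfl
  rw [this, Set.image_comp, hb.2, ha.2]

lemma sbij_perm_one (L : SLoop G) : L.SBij H (1 : Equiv.Perm G) := by
  refine ⟨(1 : Equiv.Perm G).bijective, ?_⟩
  simp [Equiv.Perm.coe_one]

lemma sbij_perm_inv (L : SLoop G) {a : Equiv.Perm G}
    (ha : L.SBij H ⇑a) : L.SBij H ⇑a⁻¹ := by
  refine ⟨(a⁻¹ : Equiv.Perm G).bijective, ?_⟩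
  have h := congrArg (fun s => ⇑a⁻¹ '' s) ha.2
  rw [← h, ← Set.image_comp]
  have : ⇑a⁻¹ ∘ ⇑a = id := by ext x; simp
  rw [this, Set.image_id]

lemma sbij_mem_of_mem (L : SLoop G) {a : Equiv.Perm G}
    (ha : L.SBij H a) {s : G} (hs : s ∈ H) : a s ∈ H := by
  rw [← ha.2]; exact Set.mem_image_of_mem _ hs

def rcar (L : SLoop G) (H : Set G) : Set (Equiv.Perm G × Equiv.Perm G × Equiv.Perm G) :=
  {T | L.SBij H T.2.1 ∧
    ∀ x : G, ∀ s ∈ H, L.mul (T.1 x) (T.2.1 s) = T.2.2 (L.mul x s)}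

def lcar (L : SLoop G) (H : Set G) : Set (Equiv.Perm G × Equiv.Perm G × Equiv.Perm G) :=
  {T | L.SBij H T.1 ∧
    ∀ y : G, ∀ s ∈ H, L.mul (T.1 s) (T.2.1 y) = T.2.2 (L.mul s y)}

def rsub (L : SLoop G) (H : Set G) : Subgroup (Equiv.Perm G × Equiv.Perm G × Equiv.Perm G) where
  carrier := rcar L H
  mul_mem' := by
    rintro T U ⟨hTb, hT⟩ ⟨hUb, hU⟩
    refine ⟨sbij_perm_mul L hTb hUb, fun x s hs => ?_⟩
    have h1 : L.mul (T.1 (U.1 x)) (T.2.1 (U.2.1 s)) = T.2.2 (L.mul (U.1 x) (U.2.1 s)) :=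
      hT (U.1 x) (U.2.1 s) (sbij_mem_of_mem L hUb hs)
    have h2 := hU x s hs
    simpa [h2] using h1
  one_mem' := ⟨sbij_perm_one L, fun x s _ => rfl⟩
  inv_mem' := by
    rintro T ⟨hTb, hT⟩
    refine ⟨sbij_perm_inv L hTb, fun x s hs => ?_⟩
    have hs' : T.2.1⁻¹ s ∈ H := sbij_mem_of_mem L (sbij_perm_inv L hTb) hs
    have h := hT (T.1⁻¹ x) (T.2.1⁻¹ s) hs'
    have := congrArg (⇑T.2.2⁻¹) h
    simpa using this.symm

def lsub (L : SLoop G) (H : Set G) : Subgroup (Equiv.Perm G × Equiv.Perm G × Equiv.Perm G) where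
  carrier := lcar L H
  mul_mem' := by
    rintro T U ⟨hTb, hT⟩ ⟨hUb, hU⟩
    refine ⟨sbij_perm_mul L hTb hUb, fun y s hs => ?_⟩
    have h1 : L.mul (T.1 (U.1 s)) (T.2.1 (U.2.1 y)) = T.2.2 (L.mul (U.1 s) (U.2.1 y)) :=
      hT (U.2.1 y) (U.1 s) (sbij_mem_of_mem L hUb hs)
    have h2 := hU y s hs
    simpa [h2] using h1
  one_mem' := ⟨sbij_perm_one L, fun y s _ => rfl⟩
  inv_mem' := by
    rintro T ⟨hTb, hT⟩
    refine ⟨sbij_perm_inv L hTb, fun y s hs => ?_⟩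
    have hs' : T.1⁻¹ s ∈ H := sbij_mem_of_mem L (sbij_perm_inv L hTb) hs
    have h := hT (T.2.1⁻¹ y) (T.1⁻¹ s) hs'
    have := congrArg (⇑T.2.2⁻¹) h
    simpa using this.symm

end Aux

/-- In a special loop, the second right Smarandache autotopisms and the second
left Smarandache autotopisms each form a group (a subgroup of the group of
triples of bijections of `G`) under componentwise composition. -/
theorem s2raut_s2laut_subgroups {G : Type*} (L : SLoop G) (H : Set G)
    (hH : L.IsSubloop H) :
    (∃ S : Subgroup (Equiv.Perm G × Equiv.Perm G × Equiv.Perm G),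
      (S : Set (Equiv.Perm G × Equiv.Perm G × Equiv.Perm G)) =
        {T | L.SBij H T.2.1 ∧
          ∀ x : G, ∀ s ∈ H, L.mul (T.1 x) (T.2.1 s) = T.2.2 (L.mul x s)}) ∧
    (∃ S : Subgroup (Equiv.Perm G × Equiv.Perm G × Equiv.Perm G),
      (S : Set (Equiv.Perm G × Equiv.Perm G × Equiv.Perm G)) =
        {T | L.SBij H T.1 ∧
          ∀ y : G, ∀ s ∈ H, L.mul (T.1 s) (T.2.1 y) = T.2.2 (L.mul s y)}) :=
  ⟨⟨rsub L H, rfl⟩, ⟨lsub L H, rfl⟩⟩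
end

section
/- Let (G_H,*) be a special loop with the second Smarandache left inverse property (s^λ*(s*y) = y for all y in G and s in H). If (U,V,W) is a second left Smarandache autotopism of G_H, then (J_λ U J_λ, W, V) is also a second left Smarandache autotopism of G_H, where J_λ U J_λ is the map s ↦ ((s^λ)U)^λ; that is, the map s ↦ ((s^λ)U)^λ is an S-bijection and ((s^λ)U)^λ * xW = (s*x)V for all x in G and s in H. -/
lemma SLoop.linv_mul {G : Type*} (L : SLoop G) (x : G) :
    L.mul (L.linv x) x = L.one :=
  Classical.choose_spec ((L.bij_right x).surjective L.one)

lemma SLoop.linv_bijective {G : Type*} (L : SLoop G) :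
    Function.Bijective L.linv := by
  constructor
  · intro a b hab
    exact (L.bij_left (L.linv a)).injective (by
      show L.mul _ a = L.mul _ b
      rw [L.linv_mul a]; rw [hab, L.linv_mul b])
  · intro y
    obtain ⟨x, hx⟩ := (L.bij_left y).surjective L.one
    refine ⟨x, (L.bij_right x).injective ?_⟩
    show L.mul (L.linv x) x = L.mul y x
    rw [L.linv_mul x]; exact hx.symm

/-- If a special loop has the second Smarandache left inverse property and
`(U,V,W)` is a second left Smarandache autotopism, then
`(J_λ U J_λ, W, V)` is also a second left Smarandache autotopism. -/
theorem s2laut_shift {G : Type*} (L : SLoop G) (H : Set G)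
    (hH : L.IsSubloop H)
    (hLIP : ∀ y : G, ∀ s ∈ H, L.mul (L.linv s) (L.mul s y) = y)
    (U V W : G → G) (hV : Function.Bijective V) (hW : Function.Bijective W)
    (hU : L.SBij H U)
    (hAT : ∀ y : G, ∀ s ∈ H, L.mul (U s) (V y) = W (L.mul s y)) :
    L.SBij H (fun s => L.linv (U (L.linv s))) ∧
      ∀ x : G, ∀ s ∈ H, L.mul (L.linv (U (L.linv s))) (W x) = V (L.mul s x) := by
  obtain ⟨h1, hmul, hldiv, hrdiv⟩ := hH
  obtain ⟨hUbij, hUim⟩ := hU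
  -- linv of an element of H lies in H
  have hlinvH : ∀ s ∈ H, L.linv s ∈ H := fun s hs =>
    hrdiv s hs L.one h1 (L.linv s) (L.linv_mul s)
  -- linv (linv s) = s for s ∈ H
  have hll : ∀ s ∈ H, L.linv (L.linv s) = s := by
    intro s hs
    have := hLIP s (L.linv s) (hlinvH s hs)
    rwa [L.linv_mul s, L.mul_one] at this
  have hUH : ∀ s ∈ H, U s ∈ H := by
    intro s hs
    rw [← hUim]; exact ⟨s, hs, rfl⟩
  constructor
  · constructor
    · exact (L.linv_bijective.comp hUbij).comp L.linv_bijective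
    · apply Set.eq_of_subset_of_subset
      · rintro _ ⟨s, hs, rfl⟩
        exact hlinvH _ (hUH _ (hlinvH s hs))
      · intro h hh
        have : L.linv h ∈ H := hlinvH h hh
        rw [← hUim] at this
        obtain ⟨u, hu, huU⟩ := this
        refine ⟨L.linv u, hlinvH u hu, ?_⟩
        simp only [hll u hu, huU, hll h hh]
  · intro x s hs
    have hls := hlinvH s hs
    have key : L.mul (U (L.linv s)) (V (L.mul s x)) = W x := by
      rw [hAT (L.mul s x) (L.linv s) hls, hLIP x s hs]
    rw [← key, hLIP (V (L.mul s x)) (U (L.linv s)) (hUH _ hls)]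
end

section
/- Let (G_H,*) be a special loop. Then G_H is a second Smarandache Bol loop if and only if for every s in H the triple (R_s^{-1}, L_s R_s, R_s) is a first Smarandache autotopism of G_H, where R_s is the right translation y ↦ y*s, L_s is the left translation y ↦ s*y, and R_s^{-1} is the inverse bijection of R_s. -/
/-- A special loop is a second Smarandache Bol loop if and only if for every
`s ∈ H` the triple `(R_s⁻¹, L_s R_s, R_s)` is a first Smarandache autotopism. -/
theorem s2bol_iff_s1aut {G : Type*} (L : SLoop G) (H : Set G)
    (hH : L.IsSubloop H) :
    L.IsS2Bol H ↔ ∀ s ∈ H,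
      L.SBij H (fun x => (Equiv.ofBijective (fun y => L.mul y s) (L.bij_right s)).symm x) ∧
      L.SBij H (fun z => L.mul (L.mul s z) s) ∧
      L.SBij H (fun y => L.mul y s) ∧
      ∀ x z : G,
        L.mul ((Equiv.ofBijective (fun y => L.mul y s) (L.bij_right s)).symm x)
            (L.mul (L.mul s z) s) = L.mul (L.mul x z) s := by

  obtain ⟨h1, hmul, hldiv, hrdiv⟩ := hH
  have key : ∀ s ∈ H,
      L.SBij H (fun x => (Equiv.ofBijective (fun y => L.mul y s) (L.bij_right s)).symm x) ∧
      L.SBij H (fun z => L.mul (L.mul s z) s) ∧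
      L.SBij H (fun y => L.mul y s) := by
    intro s hs
    set e := Equiv.ofBijective (fun y => L.mul y s) (L.bij_right s) with he
    have heapp : ∀ y, e y = L.mul y s := fun y => rfl
    have hRH : (fun y => L.mul y s) '' H = H := by
      ext b
      constructor
      · rintro ⟨a, ha, rfl⟩; exact hmul a ha s hs
      · intro hb
        obtain ⟨y, hy⟩ := (L.bij_right s).2 b
        exact ⟨y, hrdiv s hs b hb y hy, hy⟩
    refine ⟨⟨e.symm.bijective, ?_⟩, ⟨?_, ?_⟩, ⟨L.bij_right s, hRH⟩⟩
    · ext b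
      constructor
      · rintro ⟨a, ha, rfl⟩
        exact hrdiv s hs a ha _ (e.apply_symm_apply a)
      · intro hb
        exact ⟨L.mul b s, hmul b hb s hs, e.symm_apply_apply b⟩
    · have : (fun z => L.mul (L.mul s z) s) =
          (fun w => L.mul w s) ∘ (fun z => L.mul s z) := rfl
      rw [this]
      exact (L.bij_right s).comp (L.bij_left s)
    · ext b
      constructor
      · rintro ⟨a, ha, rfl⟩
        exact hmul _ (hmul s hs a ha) s hs
      · intro hb
        obtain ⟨w, hw⟩ := (L.bij_right s).2 b
        have hwH : w ∈ H := hrdiv s hs b hb w hw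
        obtain ⟨z, hz⟩ := (L.bij_left s).2 w
        have hzH : z ∈ H := hldiv s hs w hwH z hz
        exact ⟨z, hzH, by show L.mul (L.mul s z) s = b; rw [show L.mul s z = w from hz]; exact hw⟩
  constructor
  · intro hB s hs
    refine ⟨(key s hs).1, (key s hs).2.1, (key s hs).2.2, ?_⟩
    intro x z
    set e := Equiv.ofBijective (fun y => L.mul y s) (L.bij_right s) with he
    have hx : L.mul (e.symm x) s = x := e.apply_symm_apply x
    calc L.mul (e.symm x) (L.mul (L.mul s z) s)
        = L.mul (L.mul (L.mul (e.symm x) s) z) s := (hB (e.symm x) z s hs).symm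
      _ = L.mul (L.mul x z) s := by rw [hx]
  · intro hA x z s hs
    have h := (hA s hs).2.2.2 (L.mul x s) z
    have hx : (Equiv.ofBijective (fun y => L.mul y s) (L.bij_right s)).symm (L.mul x s) = x :=
      Equiv.ofBijective_symm_apply_apply _ _ x
    rw [hx] at h
    exact h.symm
end

section
/- Let (G_H,*) be a second Smarandache Bol loop. Then G_H satisfies ((s*y)*s)^ρ = (s^ρ * y^ρ) * s^ρ for all y in G and s in H (i.e., J_ρ is a second Smarandache semi-automorphism) if and only if G_H has the third Smarandache right inverse property: (s*y)*y^ρ = s for all y in G and s in H. -/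
/-- In a second Smarandache Bol loop, `J_ρ` is a second Smarandache
semi-automorphism (i.e. `((s*y)*s)^ρ = (s^ρ*y^ρ)*s^ρ` for all `y ∈ G`, `s ∈ H`)
if and only if the loop has the third Smarandache right inverse property
(`(s*y)*y^ρ = s` for all `y ∈ G`, `s ∈ H`). -/
theorem s2saipl_iff_s3rip {G : Type*} (L : SLoop G) (H : Set G)
    (hH : L.IsSubloop H) (hBol : L.IsS2Bol H) :
    (∀ s ∈ H, ∀ y : G,
        L.rinv (L.mul (L.mul s y) s) = L.mul (L.mul (L.rinv s) (L.rinv y)) (L.rinv s))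
      ↔ (∀ s ∈ H, ∀ y : G, L.mul (L.mul s y) (L.rinv y) = s) := by
  have mul_rinv : ∀ x, L.mul x (L.rinv x) = L.one := fun x =>
    Classical.choose_spec ((L.bij_left x).surjective L.one)
  have rinv_unique : ∀ x a, L.mul x a = L.one → a = L.rinv x := by
    intro x a h
    exact (L.bij_left x).injective (by simpa using h.trans (mul_rinv x).symm)
  -- s^ρ ∈ H for s ∈ H
  have hrmem : ∀ s ∈ H, L.rinv s ∈ H := fun s hs =>
    hH.2.2.1 s hs L.one hH.1 (L.rinv s) (mul_rinv s)
  -- key1 : (x*s)*s^ρ = x for s ∈ H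
  have key1 : ∀ s ∈ H, ∀ x, L.mul (L.mul x s) (L.rinv s) = x := by
    intro s hs x
    have h := hBol x (L.rinv s) s hs
    rw [mul_rinv s, L.one_mul] at h
    exact (L.bij_right s).injective h
  -- s^ρ * s = 1 for s ∈ H
  have rinv_mul : ∀ s ∈ H, L.mul (L.rinv s) s = L.one := by
    intro s hs
    have h := key1 s hs (L.rinv s)
    have h1 : L.mul (L.mul (L.rinv s) s) (L.rinv s) = L.mul L.one (L.rinv s) := by
      rw [h, L.one_mul]
    exact (L.bij_right (L.rinv s)).injective h1
  -- key identity: ((s*y)*s) * ((s^ρ*y^ρ)*s^ρ) = ((s*y)*y^ρ)*s^ρ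
  have key : ∀ s ∈ H, ∀ y,
      L.mul (L.mul (L.mul s y) s) (L.mul (L.mul (L.rinv s) (L.rinv y)) (L.rinv s))
        = L.mul (L.mul (L.mul s y) (L.rinv y)) (L.rinv s) := by
    intro s hs y
    have h := hBol (L.mul (L.mul s y) s) (L.rinv y) (L.rinv s) (hrmem s hs)
    rw [key1 s hs (L.mul s y)] at h
    exact h.symm
  constructor
  · intro hA s hs y
    have h1 : L.mul (L.mul (L.mul s y) s)
        (L.mul (L.mul (L.rinv s) (L.rinv y)) (L.rinv s)) = L.one := by
      rw [← hA s hs y]; exact mul_rinv _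
    have h2 := (key s hs y).symm.trans h1
    have h3 : L.mul (L.mul (L.mul s y) (L.rinv y)) (L.rinv s)
        = L.mul s (L.rinv s) := by rw [h2, mul_rinv]
    exact (L.bij_right (L.rinv s)).injective h3
  · intro hR s hs y
    have h1 : L.mul (L.mul (L.mul s y) s)
        (L.mul (L.mul (L.rinv s) (L.rinv y)) (L.rinv s)) = L.one := by
      rw [key s hs y, hR s hs y, mul_rinv]
    exact (rinv_unique _ _ h1).symm
end

section
/- Let (G_H,*) be a second Smarandache Bol loop and let (U,T,U) be a first Smarandache autotopism of G_H (so U and T are S-bijections of G and xU * yT = (x*y)U for all x,y in G). Then T is a second Smarandache semi-automorphism of G_H: 1T = 1 and ((s*y)*s)T = (sT * yT) * sT for all y in G and s in H. -/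
/-- In a second Smarandache Bol loop, if `(U,T,U)` is a first Smarandache
autotopism, then `T` is a second Smarandache semi-automorphism. -/
theorem s1aut_snd_semiauto {G : Type*} (L : SLoop G) (H : Set G)
    (hH : L.IsSubloop H) (hBol : L.IsS2Bol H)
    (U T : G → G) (hU : L.SBij H U) (hT : L.SBij H T)
    (hAT : ∀ x y : G, L.mul (U x) (T y) = U (L.mul x y)) :
    T L.one = L.one ∧
      ∀ s ∈ H, ∀ y : G, T (L.mul (L.mul s y) s) = L.mul (L.mul (T s) (T y)) (T s) := by
  have hT1 : T L.one = L.one := by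
    have h := hAT L.one L.one
    rw [L.mul_one] at h
    have := (L.bij_left (U L.one)).injective
    have h2 : L.mul (U L.one) (T L.one) = L.mul (U L.one) L.one := by
      rw [h, L.mul_one]
    exact this h2
  refine ⟨hT1, fun s hs y => ?_⟩
  have hTs : T s ∈ H := hT.2 ▸ ⟨s, hs, rfl⟩
  -- key: U(((1*s)*y)*s) computed two ways
  have h1 : U (L.mul (L.mul (L.mul L.one s) y) s)
      = L.mul (L.mul (L.mul (U L.one) (T s)) (T y)) (T s) := by
    rw [← hAT, ← hAT, ← hAT]
  have h2 : U (L.mul L.one (L.mul (L.mul s y) s))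
      = L.mul (U L.one) (T (L.mul (L.mul s y) s)) := (hAT _ _).symm
  have hb := hBol L.one y s hs
  have hb2 := hBol (U L.one) (T y) (T s) hTs
  have : L.mul (U L.one) (T (L.mul (L.mul s y) s))
      = L.mul (U L.one) (L.mul (L.mul (T s) (T y)) (T s)) := by
    rw [← h2, ← hb, h1, hb2]
  exact (L.bij_left (U L.one)).injective this
end

section
/- Let (G_H,*) be a second Smarandache Bol loop of Smarandache exponent 2, i.e., s*s = 1 for every s in H. Then for each s in H, the map φ = L_s R_s^{-1} (the map sending x to the unique element z with z*s = s*x) is a second Smarandache semi-automorphism of G_H: φ is an S-bijection, φ(1) = 1, and φ((t*y)*t) = (φ(t) * φ(y)) * φ(t) for all y in G and t in H. -/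
/-- In a second Smarandache Bol loop of Smarandache exponent 2
(`s*s = 1` for every `s ∈ H`), the map `φ = L_s R_s⁻¹` (the map with
`φ(x)*s = s*x`) is a second Smarandache semi-automorphism for every `s ∈ H`. -/
theorem exponent_two_semiauto {G : Type*} (L : SLoop G) (H : Set G)
    (hH : L.IsSubloop H) (hBol : L.IsS2Bol H)
    (hexp : ∀ s ∈ H, L.mul s s = L.one)
    (s : G) (hs : s ∈ H)
    (φ : G → G) (hφ : ∀ x, L.mul (φ x) s = L.mul s x) :
    L.SBij H φ ∧ φ L.one = L.one ∧
      ∀ t ∈ H, ∀ y : G, φ (L.mul (L.mul t y) t) = L.mul (L.mul (φ t) (φ y)) (φ t) := by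
  obtain ⟨h1, hmulH, hldiv, hrdiv⟩ := hH
  have injR : ∀ a : G, Function.Injective (fun x => L.mul x a) :=
    fun a => (L.bij_right a).injective
  have R2 : ∀ h ∈ H, ∀ x, L.mul (L.mul x h) h = x := by
    intro h hh x
    apply injR h
    show L.mul (L.mul (L.mul x h) h) h = L.mul x h
    rw [hBol x h h hh, hexp h hh, L.one_mul]
  have φeq : ∀ x, φ x = L.mul (L.mul s x) s := by
    intro x
    apply injR s
    show L.mul (φ x) s = L.mul (L.mul (L.mul s x) s) s
    rw [hφ, R2 s hs]
  have star : ∀ z, L.mul s (L.mul (L.mul s z) s) = L.mul z s := by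
    intro z
    rw [← hBol s z s hs, hexp s hs, L.one_mul]
  have φφ : ∀ z, φ (L.mul (L.mul s z) s) = z := by
    intro z
    rw [φeq, star, R2 s hs]
  have hinj : Function.Injective φ := by
    intro a b hab
    have h := hφ a
    rw [hab, hφ b] at h
    exact ((L.bij_left s).injective h).symm
  have hsurj : Function.Surjective φ := fun z => ⟨L.mul (L.mul s z) s, φφ z⟩
  have himg : φ '' H = H := by
    apply Set.Subset.antisymm
    · rintro _ ⟨x, hx, rfl⟩
      exact hrdiv s hs (L.mul s x) (hmulH s hs x hx) (φ x) (hφ x)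
    · intro h hh
      exact ⟨L.mul (L.mul s h) s, hmulH _ (hmulH s hs h hh) s hs, φφ h⟩
  refine ⟨⟨⟨hinj, hsurj⟩, himg⟩, ?_, ?_⟩
  · rw [φeq, L.mul_one, hexp s hs]
  · intro t ht y
    rw [φeq, φeq, φeq]
    -- LHS: s*((t*y)*t) = ((s*t)*y)*t
    have e1 : L.mul s (L.mul (L.mul t y) t) = L.mul (L.mul (L.mul s t) y) t := by
      rw [hBol s y t ht]
    -- u*v = ((s*t)*y)*s where u = (s*t)*s, v = (s*y)*s
    have e2 : L.mul (L.mul (L.mul s t) s) (L.mul (L.mul s y) s)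
        = L.mul (L.mul (L.mul s t) y) s := by
      rw [← hBol (L.mul (L.mul s t) s) y s hs, R2 s hs]
    -- (w*t)*s = (w*s)*((s*t)*s) for w = (s*t)*y
    have e3 : L.mul (L.mul (L.mul (L.mul s t) y) t) s
        = L.mul (L.mul (L.mul (L.mul s t) y) s) (L.mul (L.mul s t) s) := by
      rw [← hBol (L.mul (L.mul (L.mul s t) y) s) t s hs, R2 s hs]
    rw [e1, e2, e3]
end

section
/- Let (G_H,*) be a second Smarandache Bol loop and let (U,V,W) be a first Smarandache autotopism of G_H. Set s₁ = 1U, s₂ = 1V (so s₁, s₂ in H) and c = (s₁*s₂)*s₁. Let A = U R_{s₁}^{-1}, i.e., A is the map determined by A(x)*s₁ = xU for all x in G. Then A is a first Smarandache pseudo-automorphism of G_H with companion c: A is an S-bijection with A(1) = 1, c lies in H, and A(x) * (A(y)*c) = A(x*y)*c for all x,y in G. -/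
/-- In a second Smarandache Bol loop, a first Smarandache autotopism `(U,V,W)`
yields the first Smarandache pseudo-automorphism `A = U R_{s₁}⁻¹` with
companion `c = (s₁*s₂)*s₁`, where `s₁ = 1U` and `s₂ = 1V`. -/
theorem s1aut_pseudo_auto {G : Type*} (L : SLoop G) (H : Set G)
    (hH : L.IsSubloop H) (hBol : L.IsS2Bol H)
    (U V W : G → G) (hU : L.SBij H U) (hV : L.SBij H V) (hW : L.SBij H W)
    (hAT : ∀ x y : G, L.mul (U x) (V y) = W (L.mul x y))
    (s₁ s₂ c : G) (hs₁ : s₁ = U L.one) (hs₂ : s₂ = V L.one)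
    (hc : c = L.mul (L.mul s₁ s₂) s₁)
    (A : G → G) (hA : ∀ x, L.mul (A x) s₁ = U x) :
    s₁ ∈ H ∧ s₂ ∈ H ∧ c ∈ H ∧ L.SBij H A ∧ A L.one = L.one ∧
      ∀ x y : G, L.mul (A x) (L.mul (A y) c) = L.mul (A (L.mul x y)) c := by
  obtain ⟨h1, hmulH, hldiv, hrdiv⟩ := hH
  have hs₁H : s₁ ∈ H := by rw [hs₁, ← hU.2]; exact ⟨L.one, h1, rfl⟩
  have hs₂H : s₂ ∈ H := by rw [hs₂, ← hV.2]; exact ⟨L.one, h1, rfl⟩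
  have hcH : c ∈ H := by rw [hc]; exact hmulH _ (hmulH _ hs₁H _ hs₂H) _ hs₁H
  have hrinj : Function.Injective (fun x => L.mul x s₁) := (L.bij_right s₁).injective
  have hA1 : A L.one = L.one := by
    apply hrinj
    show L.mul (A L.one) s₁ = L.mul L.one s₁
    rw [hA, L.one_mul, hs₁]
  have hAbij : Function.Bijective A := by
    have hcomp : Function.Bijective ((fun x => L.mul x s₁) ∘ A) := by
      have : (fun x => L.mul x s₁) ∘ A = U := funext fun x => hA x
      rw [this]; exact hU.1
    exact ((Function.Bijective.of_comp_iff' (L.bij_right s₁) A)).mp hcomp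
  have hAH : A '' H = H := by
    apply Set.Subset.antisymm
    · rintro _ ⟨x, hx, rfl⟩
      have hUx : U x ∈ H := by rw [← hU.2]; exact ⟨x, hx, rfl⟩
      exact hrdiv s₁ hs₁H (U x) hUx (A x) (hA x)
    · intro h hh
      have hhs : L.mul h s₁ ∈ H := hmulH _ hh _ hs₁H
      have : L.mul h s₁ ∈ U '' H := by rw [hU.2]; exact hhs
      obtain ⟨x, hx, hUx⟩ := this
      refine ⟨x, hx, ?_⟩
      apply hrinj
      show L.mul (A x) s₁ = L.mul h s₁
      rw [hA, hUx]
  have hW1 : ∀ x, W x = L.mul (U x) s₂ := by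
    intro x
    have := hAT x L.one
    rw [L.mul_one] at this
    rw [← this, hs₂]
  have hW2 : ∀ y, W y = L.mul s₁ (V y) := by
    intro y
    have := hAT L.one y
    rw [L.one_mul] at this
    rw [← this, hs₁]
  refine ⟨hs₁H, hs₂H, hcH, ⟨hAbij, hAH⟩, hA1, fun x y => ?_⟩
  have key : ∀ z, L.mul (A z) c = L.mul (W z) s₁ := by
    intro z
    rw [hc, ← hBol (A z) s₂ s₁ hs₁H, hA, ← hW1]
  calc L.mul (A x) (L.mul (A y) c)
      = L.mul (A x) (L.mul (L.mul s₁ (V y)) s₁) := by rw [key, hW2]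
    _ = L.mul (L.mul (L.mul (A x) s₁) (V y)) s₁ := (hBol (A x) (V y) s₁ hs₁H).symm
    _ = L.mul (W (L.mul x y)) s₁ := by rw [hA, hAT]
    _ = L.mul (A (L.mul x y)) c := (key _).symm
end

section
/- Let (G_H,*) be a second Smarandache Bol loop and let (U,V,W) be a triple of bijections of G that is simultaneously a second left Smarandache autotopism and a second right Smarandache autotopism of G_H. Set s₁ = 1U, s₂ = 1V (so s₁, s₂ in H) and c = (s₁*s₂)*s₁. Let A = U R_{s₁}^{-1}, i.e., A is the map determined by A(x)*s₁ = xU for all x in G. Then A is both a second left and a second right Smarandache pseudo-automorphism of G_H with companion c: A is an S-bijection, c lies in H, A(s) * (A(y)*c) = A(s*y)*c for all y in G and s in H, and A(x) * (A(s)*c) = A(x*s)*c for all x in G and s in H. -/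
/-- In a second Smarandache Bol loop, a triple `(U,V,W)` that is simultaneously
a second left and a second right Smarandache autotopism yields the map
`A = U R_{s₁}⁻¹`, which is both a second left and a second right Smarandache
pseudo-automorphism with companion `c = (s₁*s₂)*s₁`, where `s₁ = 1U`, `s₂ = 1V`. -/
theorem s2aut_pseudo_auto {G : Type*} (L : SLoop G) (H : Set G)
    (hH : L.IsSubloop H) (hBol : L.IsS2Bol H)
    (U V W : G → G) (hU : L.SBij H U) (hV : L.SBij H V)
    (hW : Function.Bijective W)
    (hATl : ∀ s ∈ H, ∀ y : G, L.mul (U s) (V y) = W (L.mul s y))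
    (hATr : ∀ x : G, ∀ s ∈ H, L.mul (U x) (V s) = W (L.mul x s))
    (s₁ s₂ c : G) (hs₁ : s₁ = U L.one) (hs₂ : s₂ = V L.one)
    (hc : c = L.mul (L.mul s₁ s₂) s₁)
    (A : G → G) (hA : ∀ x, L.mul (A x) s₁ = U x) :
    s₁ ∈ H ∧ s₂ ∈ H ∧ c ∈ H ∧ L.SBij H A ∧
      (∀ s ∈ H, ∀ y : G, L.mul (A s) (L.mul (A y) c) = L.mul (A (L.mul s y)) c) ∧
      (∀ x : G, ∀ s ∈ H, L.mul (A x) (L.mul (A s) c) = L.mul (A (L.mul x s)) c) := by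
  obtain ⟨h1, hmulH, hldiv, hrdiv⟩ := hH
  have hs1H : s₁ ∈ H := by rw [hs₁, ← hU.2]; exact ⟨L.one, h1, rfl⟩
  have hs2H : s₂ ∈ H := by rw [hs₂, ← hV.2]; exact ⟨L.one, h1, rfl⟩
  have hcH : c ∈ H := by rw [hc]; exact hmulH _ (hmulH _ hs1H _ hs2H) _ hs1H
  have hWl : ∀ y, W y = L.mul s₁ (V y) := by
    intro y
    have := hATl L.one h1 y
    rw [L.one_mul] at this
    rw [← this, hs₁]
  have hWr : ∀ x, W x = L.mul (U x) s₂ := by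
    intro x
    have := hATr x L.one h1
    rw [L.mul_one] at this
    rw [← this, hs₂]
  have hAc : ∀ t, L.mul (A t) c = L.mul (W t) s₁ := by
    intro t
    rw [hc, ← hBol (A t) s₂ s₁ hs1H, hA, ← hWr]
  have Rinj := (L.bij_right s₁).injective
  have hAbij : Function.Bijective A := by
    constructor
    · intro a b hab
      apply hU.1.injective
      rw [← hA, ← hA, hab]
    · intro g
      obtain ⟨x, hx⟩ := hU.1.surjective (L.mul g s₁)
      exact ⟨x, Rinj (by simpa [hA] using hx)⟩
  have hAH : A '' H = H := by
    ext h
    constructor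
    · rintro ⟨s, hs, rfl⟩
      have hUsH : U s ∈ H := hU.2 ▸ ⟨s, hs, rfl⟩
      exact hrdiv s₁ hs1H (U s) hUsH (A s) (hA s)
    · intro hh
      have hmem : L.mul h s₁ ∈ H := hmulH h hh s₁ hs1H
      rw [← hU.2] at hmem
      obtain ⟨s, hs, hUs⟩ := hmem
      exact ⟨s, hs, Rinj (by simpa [hA] using hUs)⟩
  refine ⟨hs1H, hs2H, hcH, ⟨hAbij, hAH⟩, ?_, ?_⟩
  · intro s hs y
    rw [hAc y, hAc (L.mul s y), hWl y, ← hBol (A s) (V y) s₁ hs1H, hA,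
      hATl s hs y]
  · intro x s hs
    rw [hAc s, hAc (L.mul x s), hWl s, ← hBol (A x) (V s) s₁ hs1H, hA,
      hATr x s hs]
end
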